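/- arXiv:1810.04206 — 3 statements merged into one kernel-verified Lean document; each statement's English description precedes it below -/
import Mathlib

section
/- Let E and F be nonempty closed convex sets in a real Hilbert space H. The following are equivalent: (a) every vector u ∈ H satisfies u = p_E(u) + p_F(u); (b) E and F are polar cones of each other, i.e., E = F° and F = E°. -/
open RealInnerProductSpace Pointwise

/-- The (negative) polar set of `X`. -/
def polarSet {H : Type*} [NormedAddCommGroup H] [InnerProductSpace ℝ H] (X : Set H) : Set H :=
  {x | ∀ e ∈ X, ⟪x, e⟫ ≤ 0}

/-- `y` is the metric projection of `u` on `E`: it belongs to `E` and is nearest to `u`. -/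
def IsMetricProj {H : Type*} [NormedAddCommGroup H] [InnerProductSpace ℝ H]
    (E : Set H) (u y : H) : Prop :=
  y ∈ E ∧ ∀ x ∈ E, ‖u - y‖ ≤ ‖u - x‖

/-!
For convex `K`, the point `p ∈ K` is the projection of `u` iff `⟪u - p, x - p⟫ ≤ 0` for all
`x ∈ K`; for `p = 0` this says exactly `u ∈ K°`. If `u = p_E u + p_F u` for all `u`, then
`u ∈ E` iff `p_F u = 0`, i.e. iff `u ∈ F°`, and symmetrically. Conversely, if `E = F°` and
`F = E°` and `y = p_E u`, testing the inequality at `0` and `2 • y` (both in the cone `E`) gives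
`⟪u - y, y⟫ = 0`; then `u - y` lies in `E° = F` and satisfies the inequality characterising
`p_F u` (Moreau's decomposition).
-/

section MetricProj

variable {H : Type*} [NormedAddCommGroup H] [InnerProductSpace ℝ H] {K : Set H} {u v w : H}

lemma isMetricProj_iff_norm_eq_iInf (hv : v ∈ K) :
    IsMetricProj K u v ↔ ‖u - v‖ = ⨅ x : K, ‖u - x‖ := by
  have : Nonempty K := ⟨⟨v, hv⟩⟩
  have hbdd : BddBelow (Set.range fun x : K => ‖u - x‖) :=
    ⟨0, Set.forall_mem_range.2 fun _ => norm_nonneg _⟩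
  exact ⟨fun h => le_antisymm (le_ciInf fun x => h.2 x x.2) (ciInf_le hbdd ⟨v, hv⟩),
    fun h => ⟨hv, fun x hx => h ▸ ciInf_le hbdd ⟨x, hx⟩⟩⟩

lemma isMetricProj_iff_inner_le_zero (hK : Convex ℝ K) (hv : v ∈ K) :
    IsMetricProj K u v ↔ ∀ x ∈ K, ⟪u - v, x - v⟫ ≤ 0 :=
  (isMetricProj_iff_norm_eq_iInf hv).trans (norm_eq_iInf_iff_real_inner_le_zero hK hv)

lemma isMetricProj_self (hu : u ∈ K) : IsMetricProj K u u :=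
  ⟨hu, fun x _ => by simp⟩

lemma exists_isMetricProj (hne : K.Nonempty) (hK : IsComplete K) (hconv : Convex ℝ K) (u : H) :
    ∃ v, IsMetricProj K u v :=
  let ⟨v, hv, h⟩ := exists_norm_eq_iInf_of_complete_convex hne hK hconv u
  ⟨v, (isMetricProj_iff_norm_eq_iInf hv).2 h⟩

lemma IsMetricProj.unique (hK : Convex ℝ K) (hv : IsMetricProj K u v) (hw : IsMetricProj K u w) :
    v = w := by
  have hvw := (isMetricProj_iff_inner_le_zero hK hv.1).1 hv w hw.1
  have hwv := (isMetricProj_iff_inner_le_zero hK hw.1).1 hw v hv.1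
  have hsplit : ⟪v - w, v - w⟫ = ⟪u - w, v - w⟫ + ⟪u - v, w - v⟫ := by
    rw [← neg_sub v w, inner_neg_right, ← sub_eq_add_neg, ← inner_sub_left]
    congr 1
    abel
  exact sub_eq_zero.1 (real_inner_self_nonpos.1 (by linarith))

lemma isMetricProj_zero_iff_mem_polarSet (hK : Convex ℝ K) (h0 : (0 : H) ∈ K) :
    IsMetricProj K u 0 ↔ u ∈ polarSet K := by
  simp [isMetricProj_iff_inner_le_zero hK h0, polarSet]

end MetricProj

section Polar

variable {H : Type*} [NormedAddCommGroup H] [InnerProductSpace ℝ H] {X : Set H} {u y : H}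

lemma convex_polarSet (X : Set H) : Convex ℝ (polarSet X) := by
  intro x hx x' hx' a b ha hb _ e he
  rw [inner_add_left, real_inner_smul_left, real_inner_smul_left]
  exact add_nonpos (mul_nonpos_of_nonneg_of_nonpos ha (hx e he))
    (mul_nonpos_of_nonneg_of_nonpos hb (hx' e he))

lemma zero_mem_polarSet (X : Set H) : (0 : H) ∈ polarSet X :=
  fun e _ => by simp

lemma smul_mem_polarSet {c : ℝ} (hc : 0 ≤ c) {x : H} (hx : x ∈ polarSet X) :
    c • x ∈ polarSet X := fun e he => by
  rw [real_inner_smul_left]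
  exact mul_nonpos_of_nonneg_of_nonpos hc (hx e he)

lemma IsMetricProj.inner_sub_self_eq_zero (h : IsMetricProj (polarSet X) u y) :
    ⟪u - y, y⟫ = 0 := by
  have hvi := (isMetricProj_iff_inner_le_zero (convex_polarSet X) h.1).1 h
  have h0 := hvi 0 (zero_mem_polarSet X)
  have h2 := hvi ((2 : ℝ) • y) (smul_mem_polarSet zero_le_two h.1)
  rw [zero_sub, inner_neg_right] at h0
  rw [two_smul, add_sub_cancel_right] at h2
  linarith

lemma IsMetricProj.sub_mem_polarSet (h : IsMetricProj (polarSet X) u y) :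
    u - y ∈ polarSet (polarSet X) := fun x hx => by
  have hvi := (isMetricProj_iff_inner_le_zero (convex_polarSet X) h.1).1 h x hx
  rw [← sub_add_cancel x y, inner_add_right, h.inner_sub_self_eq_zero, add_zero]
  exact hvi

theorem IsMetricProj.sub_polarSet (h : IsMetricProj (polarSet X) u y) :
    IsMetricProj (polarSet (polarSet X)) u (u - y) := by
  rw [isMetricProj_iff_inner_le_zero (convex_polarSet _) h.sub_mem_polarSet]
  intro x hx
  rw [sub_sub_cancel, inner_sub_right, real_inner_comm (u - y) y, h.inner_sub_self_eq_zero, sub_zero,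
    real_inner_comm]
  exact hx y h.1

end Polar

section Decomposition

variable {H : Type*} [NormedAddCommGroup H] [InnerProductSpace ℝ H] {E F : Set H}

lemma mem_iff_isMetricProj_zero_of_decomposition
    (hdec : ∀ u y z : H, IsMetricProj E u y → IsMetricProj F u z → u = y + z)
    (hE : ∀ u, ∃ y, IsMetricProj E u y) (hF : ∀ u, ∃ z, IsMetricProj F u z) (u : H) :
    u ∈ E ↔ IsMetricProj F u 0 := by
  constructor
  · intro hu
    obtain ⟨z, hz⟩ := hF u
    rwa [left_eq_add.1 (hdec u u z (isMetricProj_self hu) hz)] at hz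
  · intro h0
    obtain ⟨y, hy⟩ := hE u
    rw [hdec u y 0 hy h0, add_zero]
    exact hy.1

lemma eq_polarSet_of_decomposition
    (hdec : ∀ u y z : H, IsMetricProj E u y → IsMetricProj F u z → u = y + z)
    (hE : ∀ u, ∃ y, IsMetricProj E u y) (hF : ∀ u, ∃ z, IsMetricProj F u z)
    (hEne : E.Nonempty) (hFconv : Convex ℝ F) :
    E = polarSet F := by
  obtain ⟨e, he⟩ := hEne
  have h0 : (0 : H) ∈ F := ((mem_iff_isMetricProj_zero_of_decomposition hdec hE hF e).1 he).1
  ext u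
  rw [mem_iff_isMetricProj_zero_of_decomposition hdec hE hF,
    isMetricProj_zero_iff_mem_polarSet hFconv h0]

end Decomposition

theorem decomposition_characterizes_polar_cones
    {H : Type*} [NormedAddCommGroup H] [InnerProductSpace ℝ H] [CompleteSpace H]
    (E F : Set H) (hEne : E.Nonempty) (hEcl : IsClosed E) (hEconv : Convex ℝ E)
    (hFne : F.Nonempty) (hFcl : IsClosed F) (hFconv : Convex ℝ F) :
    (∀ u y z : H, IsMetricProj E u y → IsMetricProj F u z → u = y + z) ↔
      (E = polarSet F ∧ F = polarSet E) := by
  have hE := exists_isMetricProj hEne hEcl.isComplete hEconv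
  have hF := exists_isMetricProj hFne hFcl.isComplete hFconv
  constructor
  · intro hdec
    have hdec' : ∀ u z y : H, IsMetricProj F u z → IsMetricProj E u y → u = z + y :=
      fun u z y hz hy => (hdec u y z hy hz).trans (add_comm y z)
    exact ⟨eq_polarSet_of_decomposition hdec hE hF hEne hFconv,
      eq_polarSet_of_decomposition hdec' hF hE hFne hEconv⟩
  · rintro ⟨hEF, hFE⟩ u y z hy hz
    rw [hEF] at hy
    have hz' := hy.sub_polarSet
    rw [← hEF, ← hFE] at hz'
    rw [hz.unique hFconv hz', add_sub_cancel]
end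

section
/- Let E and F be nonempty convex sets in ℝⁿ. The following are equivalent: (a) every vector u ∈ ℝⁿ is uniquely expressible as u = y + z with y ∈ E and z ∈ F (uniqueness meaning: if u = y₁ + z₁ = y₂ + z₂ with y₁, y₂ ∈ E and z₁, z₂ ∈ F, then y₁ = y₂ and z₁ = z₂); (b) E and F are complementary planes, i.e., there exist vectors c₁, c₂ ∈ ℝⁿ and linear subspaces S₁, S₂ of ℝⁿ with S₁ + S₂ = ℝⁿ and S₁ ∩ S₂ = {0} such that E = c₁ + S₁ and F = c₂ + S₂. -/
/-!
Unique decomposition says that `E + F` is the whole space and that the difference sets `E - E`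
and `F - F` meet only in `0`. A difference set of a nonempty convex set is convex, symmetric and
contains `0`, so every vector of its span is a positive multiple of one of its elements;
rescaling to the smaller multiple shows that the direction spaces `vectorSpan E` and
`vectorSpan F` meet only in `0`, while `E + F = univ` makes them span the space. Finally, for
`e₀ ∈ E`, `f₀ ∈ F` and `s ∈ vectorSpan E`, write `e₀ + s + f₀ = y + z` with `y ∈ E`, `z ∈ F`:
then `z - f₀ = s - (y - e₀)` lies in both direction spaces, so `z = f₀` and `e₀ + s = y ∈ E`.
-/

open Pointwise

section
variable {V : Type*} [AddCommGroup V] [Module ℝ V]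

theorem exists_pos_smul_mem_of_mem_span {D : Set V} (hD : Convex ℝ D) (h0 : (0 : V) ∈ D)
    (hneg : ∀ x ∈ D, -x ∈ D) {v : V} (hv : v ∈ Submodule.span ℝ D) :
    ∃ t : ℝ, 0 < t ∧ t • v ∈ D := by
  induction hv using Submodule.span_induction with
  | mem x hx => exact ⟨1, one_pos, by rwa [one_smul]⟩
  | zero => exact ⟨1, one_pos, by rwa [smul_zero]⟩
  | add x y _ _ ihx ihy =>
    obtain ⟨s, hs, hsx⟩ := ihx
    obtain ⟨t, ht, hty⟩ := ihy
    -- `(s * t / (s + t)) • (x + y)` is a convex combination of `s • x` and `t • y`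
    refine ⟨s * t / (s + t), by positivity, ?_⟩
    convert hD hsx hty (a := t / (s + t)) (b := s / (s + t)) (by positivity) (by positivity)
      (by field_simp; ring) using 1
    match_scalars <;> field_simp
  | smul c x _ ihx =>
    obtain ⟨s, hs, hsx⟩ := ihx
    rcases eq_or_ne c 0 with rfl | hc
    · exact ⟨1, one_pos, by rwa [zero_smul, smul_zero]⟩
    refine ⟨s / |c|, by positivity, ?_⟩
    rcases abs_choice c with h | h
    · convert hsx using 1
      rw [smul_smul, h]; field_simp
    · convert hneg _ hsx using 1
      rw [smul_smul, h, ← neg_smul]; congr 1; field_simp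

theorem Convex.smul_mem_of_smul_mem_of_le {D : Set V} (hD : Convex ℝ D) (h0 : (0 : V) ∈ D)
    {s r : ℝ} {v : V} (hs : 0 < s) (hsv : s • v ∈ D) (hr : 0 ≤ r) (hrs : r ≤ s) : r • v ∈ D := by
  convert hD.smul_mem_of_zero_mem h0 hsv ⟨div_nonneg hr hs.le, (div_le_one hs).2 hrs⟩ using 1
  rw [smul_smul, div_mul_cancel₀ r hs.ne']

theorem span_inf_span_eq_bot_of_inter_subset_zero {D₁ D₂ : Set V}
    (hD₁ : Convex ℝ D₁) (hD₂ : Convex ℝ D₂) (h0₁ : (0 : V) ∈ D₁) (h0₂ : (0 : V) ∈ D₂)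
    (hneg₁ : ∀ x ∈ D₁, -x ∈ D₁) (hneg₂ : ∀ x ∈ D₂, -x ∈ D₂) (h : D₁ ∩ D₂ ⊆ {0}) :
    Submodule.span ℝ D₁ ⊓ Submodule.span ℝ D₂ = ⊥ := by
  refine (Submodule.eq_bot_iff _).2 fun v ⟨hv₁, hv₂⟩ => ?_
  obtain ⟨s, hs, hsv⟩ := exists_pos_smul_mem_of_mem_span hD₁ h0₁ hneg₁ hv₁
  obtain ⟨t, ht, htv⟩ := exists_pos_smul_mem_of_mem_span hD₂ h0₂ hneg₂ hv₂
  have hr : 0 < min s t := lt_min hs ht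
  refine (smul_eq_zero.1 ?_).resolve_left hr.ne'
  exact h ⟨hD₁.smul_mem_of_smul_mem_of_le h0₁ hs hsv hr.le (min_le_left s t),
    hD₂.smul_mem_of_smul_mem_of_le h0₂ ht htv hr.le (min_le_right s t)⟩

theorem Convex.vectorSpan_inf_vectorSpan_eq_bot {E F : Set V} (hE : Convex ℝ E) (hF : Convex ℝ F)
    (hEne : E.Nonempty) (hFne : F.Nonempty) (h : (E -ᵥ E) ∩ (F -ᵥ F) ⊆ {0}) :
    vectorSpan ℝ E ⊓ vectorSpan ℝ F = ⊥ := by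
  have hneg : ∀ C : Set V, ∀ x ∈ C -ᵥ C, -x ∈ C -ᵥ C := by
    rintro C _ ⟨a, ha, b, hb, rfl⟩
    exact ⟨b, hb, a, ha, (neg_vsub_eq_vsub_rev a b).symm⟩
  have h0 : ∀ {C : Set V}, C.Nonempty → (0 : V) ∈ C -ᵥ C := fun ⟨c, hc⟩ =>
    ⟨c, hc, c, hc, vsub_self c⟩
  exact span_inf_span_eq_bot_of_inter_subset_zero (hE.sub hE) (hF.sub hF) (h0 hEne) (h0 hFne)
    (hneg E) (hneg F) h

end

theorem Set.add_eq_univ_iff {M : Type*} [Add M] {s t : Set M} :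
    s + t = Set.univ ↔ ∀ u, ∃ y ∈ s, ∃ z ∈ t, u = y + z := by
  simp only [Set.eq_univ_iff_forall, Set.mem_add, eq_comm]

section
variable {R V : Type*} [Ring R] [AddCommGroup V] [Module R V]

theorem vectorSpan_sup_vectorSpan_eq_top {E F : Set V} (h : E + F = Set.univ)
    (hEne : E.Nonempty) (hFne : F.Nonempty) : vectorSpan R E ⊔ vectorSpan R F = ⊤ := by
  obtain ⟨e₀, he₀⟩ := hEne
  obtain ⟨f₀, hf₀⟩ := hFne
  refine Submodule.eq_top_iff'.2 fun x => ?_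
  obtain ⟨y, hy, z, hz, hyz⟩ := Set.add_eq_univ_iff.1 h (x + e₀ + f₀)
  have hx : x = (y -ᵥ e₀) + (z -ᵥ f₀) := by
    simp only [vsub_eq_sub]; linear_combination (norm := abel) hyz
  rw [hx]
  exact Submodule.add_mem_sup (vsub_mem_vectorSpan R hy he₀) (vsub_mem_vectorSpan R hz hf₀)

theorem eq_vadd_vectorSpan_of_add_eq_univ {E F : Set V} (h : E + F = Set.univ)
    (hinf : vectorSpan R E ⊓ vectorSpan R F = ⊥) {e₀ : V} (he₀ : e₀ ∈ E) (hFne : F.Nonempty) :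
    E = e₀ +ᵥ (vectorSpan R E : Set V) := by
  obtain ⟨f₀, hf₀⟩ := hFne
  ext x
  refine ⟨fun hx => ⟨x -ᵥ e₀, vsub_mem_vectorSpan R hx he₀, add_sub_cancel e₀ x⟩, ?_⟩
  rintro ⟨s, hs, rfl⟩
  obtain ⟨y, hy, z, hz, hyz⟩ := Set.add_eq_univ_iff.1 h (e₀ + s + f₀)
  have hzf : z -ᵥ f₀ ∈ vectorSpan R E ⊓ vectorSpan R F := by
    refine ⟨?_, vsub_mem_vectorSpan R hz hf₀⟩
    have : z -ᵥ f₀ = s - (y -ᵥ e₀) := by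
      simp only [vsub_eq_sub]; linear_combination (norm := abel) -hyz
    rw [this]
    exact sub_mem hs (vsub_mem_vectorSpan R hy he₀)
  rw [hinf, Submodule.mem_bot, vsub_eq_zero_iff_eq] at hzf
  subst hzf
  show e₀ + s ∈ E
  rwa [add_right_cancel hyz]

theorem add_eq_univ_of_sup_eq_top {S₁ S₂ : Submodule R V} (hsup : S₁ ⊔ S₂ = ⊤) (c₁ c₂ : V) :
    (c₁ +ᵥ (S₁ : Set V)) + (c₂ +ᵥ (S₂ : Set V)) = Set.univ := by
  refine Set.add_eq_univ_iff.2 fun u => ?_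
  obtain ⟨s, hs, t, ht, hst⟩ :=
    Submodule.mem_sup.1 (hsup ▸ Submodule.mem_top : u - c₁ - c₂ ∈ S₁ ⊔ S₂)
  refine ⟨c₁ + s, ⟨s, hs, rfl⟩, c₂ + t, ⟨t, ht, rfl⟩, ?_⟩
  linear_combination (norm := abel) -hst

theorem eq_and_eq_of_add_eq_add_of_inf_eq_bot {S₁ S₂ : Submodule R V} (hinf : S₁ ⊓ S₂ = ⊥)
    {c₁ c₂ y₁ y₂ z₁ z₂ : V} (hy₁ : y₁ ∈ c₁ +ᵥ (S₁ : Set V)) (hy₂ : y₂ ∈ c₁ +ᵥ (S₁ : Set V))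
    (hz₁ : z₁ ∈ c₂ +ᵥ (S₂ : Set V)) (hz₂ : z₂ ∈ c₂ +ᵥ (S₂ : Set V)) (h : y₁ + z₁ = y₂ + z₂) :
    y₁ = y₂ ∧ z₁ = z₂ := by
  obtain ⟨s₁, hs₁, rfl⟩ := hy₁
  obtain ⟨s₂, hs₂, rfl⟩ := hy₂
  obtain ⟨t₁, ht₁, rfl⟩ := hz₁
  obtain ⟨t₂, ht₂, rfl⟩ := hz₂
  have hs : s₁ - s₂ ∈ S₁ ⊓ S₂ := by
    refine ⟨sub_mem hs₁ hs₂, ?_⟩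
    have : s₁ - s₂ = t₂ - t₁ := by
      simp only [vadd_eq_add] at h; linear_combination (norm := abel) h
    exact this ▸ sub_mem ht₂ ht₁
  rw [hinf, Submodule.mem_bot, sub_eq_zero] at hs
  subst hs
  exact ⟨rfl, add_left_cancel h⟩

end

theorem unique_decomposition_characterizes_complementary_planes
    (n : ℕ) (E F : Set (EuclideanSpace ℝ (Fin n)))
    (hEne : E.Nonempty) (hEconv : Convex ℝ E)
    (hFne : F.Nonempty) (hFconv : Convex ℝ F) :
    ((∀ u : EuclideanSpace ℝ (Fin n), ∃ y ∈ E, ∃ z ∈ F, u = y + z) ∧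
      (∀ u y₁ z₁ y₂ z₂ : EuclideanSpace ℝ (Fin n),
        y₁ ∈ E → z₁ ∈ F → y₂ ∈ E → z₂ ∈ F →
        u = y₁ + z₁ → u = y₂ + z₂ → y₁ = y₂ ∧ z₁ = z₂)) ↔
      (∃ (c₁ c₂ : EuclideanSpace ℝ (Fin n))
          (S₁ S₂ : Submodule ℝ (EuclideanSpace ℝ (Fin n))),
        S₁ ⊔ S₂ = ⊤ ∧ S₁ ⊓ S₂ = ⊥ ∧
        E = c₁ +ᵥ (S₁ : Set (EuclideanSpace ℝ (Fin n))) ∧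
        F = c₂ +ᵥ (S₂ : Set (EuclideanSpace ℝ (Fin n)))) := by
  constructor
  · rintro ⟨hsurj, huniq⟩
    have hadd : E + F = Set.univ := Set.add_eq_univ_iff.2 hsurj
    have hdiff : (E -ᵥ E) ∩ (F -ᵥ F) ⊆ {0} := by
      rintro _ ⟨⟨a, ha, b, hb, rfl⟩, ⟨p, hp, q, hq, hpq⟩⟩
      have hsum : a + q = b + p := by
        simp only [vsub_eq_sub] at hpq; linear_combination (norm := abel) -hpq
      exact vsub_eq_zero_iff_eq.2 (huniq _ a q b p ha hq hb hp rfl hsum).1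
    have hinf := hEconv.vectorSpan_inf_vectorSpan_eq_bot hFconv hEne hFne hdiff
    exact ⟨hEne.some, hFne.some, vectorSpan ℝ E, vectorSpan ℝ F,
      vectorSpan_sup_vectorSpan_eq_top hadd hEne hFne, hinf,
      eq_vadd_vectorSpan_of_add_eq_univ hadd hinf hEne.some_mem hFne,
      eq_vadd_vectorSpan_of_add_eq_univ (add_comm E F ▸ hadd)
        (inf_comm (vectorSpan ℝ E) _ ▸ hinf) hFne.some_mem hEne⟩
  · rintro ⟨c₁, c₂, S₁, S₂, hsup, hinf, rfl, rfl⟩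
    exact ⟨Set.add_eq_univ_iff.1 (add_eq_univ_of_sup_eq_top hsup c₁ c₂),
      fun _ _ _ _ _ hy₁ hz₁ hy₂ hz₂ h₁ h₂ =>
        eq_and_eq_of_add_eq_add_of_inf_eq_bot hinf hy₁ hy₂ hz₁ hz₂ (h₁.symm.trans h₂)⟩
end

section
/- Let E and F be nonempty convex sets in ℝⁿ containing the origin such that every vector u ∈ ℝⁿ is uniquely expressible as u = y + z with y ∈ E and z ∈ F (uniqueness meaning: if u = y₁ + z₁ = y₂ + z₂ with y₁, y₂ ∈ E and z₁, z₂ ∈ F, then y₁ = y₂ and z₁ = z₂). If the origin belongs to the relative interior of E or to the relative interior of F, then E and F are complementary linear subspaces of ℝⁿ: both are linear subspaces, E + F = ℝⁿ, and E ∩ F = {0}. -/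
/-!
Uniqueness of the decomposition forces each of `E`, `F` to be an additive subgroup: if
`a, b ∈ E` and `a + b = y + z`, then the midpoint `½a + ½b ∈ E` has the two decompositions
`(½a + ½b) + 0` and `½y + ½z`, so `z = 0` and `a + b ∈ E`; likewise `-a = y + z` gives the two
decompositions `0 + 0` and `(½a + ½y) + ½z` of `0`. A convex additive subgroup of a real vector
space is closed under all real scalings, hence a subspace.
-/

open Pointwise Set

section ConvexAddSubgroup

variable {V : Type*} [AddCommGroup V] [Module ℝ V]

theorem AddSubgroup.smul_mem_of_convex (G : AddSubgroup V) (hG : Convex ℝ (G : Set V)) (c : ℝ)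
    {x : V} (hx : x ∈ G) : c • x ∈ G := by
  wlog hc : 0 < c generalizing c x
  · rcases (not_lt.1 hc).eq_or_lt with rfl | hc
    · simp only [zero_smul, G.zero_mem]
    · simpa using this (-c) (neg_mem hx) (neg_pos.2 hc)
  obtain ⟨k, hk⟩ := exists_nat_ge c
  have hk0 : (0 : ℝ) < k := hc.trans_le hk
  have hkx : (k : ℝ) • x ∈ G := by
    rw [Nat.cast_smul_eq_nsmul]
    exact G.nsmul_mem hx k
  rw [← div_mul_cancel₀ c hk0.ne', mul_smul]
  exact hG.smul_mem_of_zero_mem G.zero_mem hkx ⟨by positivity, div_le_one_of_le₀ hk hk0.le⟩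

theorem AddSubgroup.exists_submodule_eq_of_convex (G : AddSubgroup V)
    (hG : Convex ℝ (G : Set V)) : ∃ S : Submodule ℝ V, (G : Set V) = S :=
  ⟨{ G with smul_mem' := fun c _ hx => G.smul_mem_of_convex hG c hx }, rfl⟩

end ConvexAddSubgroup

section UniqueDecomposition

variable {V : Type*} [AddCommGroup V] {E F : Set V}

theorem injOn_add_prod_comm (hinj : InjOn (fun p : V × V => p.1 + p.2) (E ×ˢ F)) :
    InjOn (fun p : V × V => p.1 + p.2) (F ×ˢ E) := fun p hp q hq h =>
  Prod.swap_injective <| hinj (mk_mem_prod hp.2 hp.1) (mk_mem_prod hq.2 hq.1) <| by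
    simpa only [Prod.fst_swap, Prod.snd_swap, add_comm] using h

theorem inter_eq_singleton_zero_of_injOn_add (hE0 : (0 : V) ∈ E) (hF0 : (0 : V) ∈ F)
    (hinj : InjOn (fun p : V × V => p.1 + p.2) (E ×ˢ F)) : E ∩ F = {0} := by
  refine Subset.antisymm (fun x ⟨hxE, hxF⟩ => ?_) (singleton_subset_iff.2 ⟨hE0, hF0⟩)
  have h := hinj (mk_mem_prod hxE hF0) (mk_mem_prod hE0 hxF) (by simp only [add_zero, zero_add])
  exact (Prod.ext_iff.1 h).1

theorem eq_zero_of_add_mem_of_injOn_add (hF0 : (0 : V) ∈ F)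
    (hinj : InjOn (fun p : V × V => p.1 + p.2) (E ×ˢ F)) {y z : V} (hy : y ∈ E) (hz : z ∈ F)
    (hyz : y + z ∈ E) : z = 0 :=
  (Prod.ext_iff.1 (hinj (mk_mem_prod hy hz) (mk_mem_prod hyz hF0) (add_zero _).symm)).2

variable [Module ℝ V]

theorem eq_zero_of_add_half_smul_mem (hFconv : Convex ℝ F) (hF0 : (0 : V) ∈ F)
    (hinj : InjOn (fun p : V × V => p.1 + p.2) (E ×ˢ F)) {y z : V} (hy : y ∈ E) (hz : z ∈ F)
    (hyz : y + (1 / 2 : ℝ) • z ∈ E) : z = 0 := by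
  have hz' : (1 / 2 : ℝ) • z ∈ F :=
    hFconv.smul_mem_of_zero_mem hF0 hz ⟨by norm_num, by norm_num⟩
  simpa using eq_zero_of_add_mem_of_injOn_add hF0 hinj hy hz' hyz

theorem add_mem_of_injOn_add (hEconv : Convex ℝ E) (hFconv : Convex ℝ F) (hE0 : (0 : V) ∈ E)
    (hF0 : (0 : V) ∈ F) (hsum : E + F = univ)
    (hinj : InjOn (fun p : V × V => p.1 + p.2) (E ×ˢ F))
    {a b : V} (ha : a ∈ E) (hb : b ∈ E) : a + b ∈ E := by
  obtain ⟨y, hy, z, hz, hyz⟩ := mem_add.1 (hsum ▸ mem_univ (a + b))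
  have hmid : (1 / 2 : ℝ) • a + (1 / 2 : ℝ) • b ∈ E :=
    hEconv ha hb (by norm_num) (by norm_num) (by norm_num)
  have hz0 : z = 0 := by
    refine eq_zero_of_add_half_smul_mem hFconv hF0 hinj
      (hEconv.smul_mem_of_zero_mem hE0 hy (t := 1 / 2) ⟨by norm_num, by norm_num⟩) hz ?_
    rwa [← smul_add, hyz, smul_add]
  rwa [← hyz, hz0, add_zero]

theorem neg_mem_of_injOn_add (hEconv : Convex ℝ E) (hFconv : Convex ℝ F) (hE0 : (0 : V) ∈ E)
    (hF0 : (0 : V) ∈ F) (hsum : E + F = univ)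
    (hinj : InjOn (fun p : V × V => p.1 + p.2) (E ×ˢ F))
    {a : V} (ha : a ∈ E) : -a ∈ E := by
  obtain ⟨y, hy, z, hz, hyz⟩ := mem_add.1 (hsum ▸ mem_univ (-a))
  have hz0 : z = 0 := by
    refine eq_zero_of_add_half_smul_mem hFconv hF0 hinj
      (hEconv ha hy (a := 1 / 2) (b := 1 / 2) (by norm_num) (by norm_num) (by norm_num)) hz ?_
    rwa [← smul_add, ← smul_add, add_assoc, hyz, add_neg_cancel, smul_zero]
  rwa [← hyz, hz0, add_zero]

theorem exists_submodule_eq_of_injOn_add (hEconv : Convex ℝ E) (hFconv : Convex ℝ F)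
    (hE0 : (0 : V) ∈ E) (hF0 : (0 : V) ∈ F) (hsum : E + F = univ)
    (hinj : InjOn (fun p : V × V => p.1 + p.2) (E ×ˢ F)) :
    ∃ S : Submodule ℝ V, E = S :=
  AddSubgroup.exists_submodule_eq_of_convex
    { carrier := E
      add_mem' := add_mem_of_injOn_add hEconv hFconv hE0 hF0 hsum hinj
      zero_mem' := hE0
      neg_mem' := neg_mem_of_injOn_add hEconv hFconv hE0 hF0 hsum hinj } hEconv

end UniqueDecomposition

theorem complementary_subspaces_of_unique_decomposition_general
    (n : ℕ) (E F : Set (EuclideanSpace ℝ (Fin n)))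
    (hEconv : Convex ℝ E)
    (hFconv : Convex ℝ F)
    (hE0 : (0 : EuclideanSpace ℝ (Fin n)) ∈ E)
    (hF0 : (0 : EuclideanSpace ℝ (Fin n)) ∈ F)
    (hex : ∀ u : EuclideanSpace ℝ (Fin n), ∃ y ∈ E, ∃ z ∈ F, u = y + z)
    (huniq : ∀ u y₁ z₁ y₂ z₂ : EuclideanSpace ℝ (Fin n),
      y₁ ∈ E → z₁ ∈ F → y₂ ∈ E → z₂ ∈ F →
      u = y₁ + z₁ → u = y₂ + z₂ → y₁ = y₂ ∧ z₁ = z₂) :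
    (∃ S : Submodule ℝ (EuclideanSpace ℝ (Fin n)), E = (S : Set _)) ∧
      (∃ S : Submodule ℝ (EuclideanSpace ℝ (Fin n)), F = (S : Set _)) ∧
      E + F = Set.univ ∧ E ∩ F = {0} := by
  have hsum : E + F = univ := eq_univ_of_forall fun u => by
    obtain ⟨y, hy, z, hz, rfl⟩ := hex u
    exact add_mem_add hy hz
  have hinj : InjOn (fun p => p.1 + p.2) (E ×ˢ F) := fun p hp q hq h =>
    Prod.ext_iff.2 (huniq _ _ _ _ _ hp.1 hp.2 hq.1 hq.2 rfl h)
  exact ⟨exists_submodule_eq_of_injOn_add hEconv hFconv hE0 hF0 hsum hinj,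
    exists_submodule_eq_of_injOn_add hFconv hEconv hF0 hE0 (add_comm E F ▸ hsum)
      (injOn_add_prod_comm hinj),
    hsum, inter_eq_singleton_zero_of_injOn_add hE0 hF0 hinj⟩

theorem complementary_subspaces_of_unique_decomposition
    (n : ℕ) (E F : Set (EuclideanSpace ℝ (Fin n)))
    (hEne : E.Nonempty) (hEconv : Convex ℝ E)
    (hFne : F.Nonempty) (hFconv : Convex ℝ F)
    (hE0 : (0 : EuclideanSpace ℝ (Fin n)) ∈ E)
    (hF0 : (0 : EuclideanSpace ℝ (Fin n)) ∈ F)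
    (hex : ∀ u : EuclideanSpace ℝ (Fin n), ∃ y ∈ E, ∃ z ∈ F, u = y + z)
    (huniq : ∀ u y₁ z₁ y₂ z₂ : EuclideanSpace ℝ (Fin n),
      y₁ ∈ E → z₁ ∈ F → y₂ ∈ E → z₂ ∈ F →
      u = y₁ + z₁ → u = y₂ + z₂ → y₁ = y₂ ∧ z₁ = z₂)
    (hri : (0 : EuclideanSpace ℝ (Fin n)) ∈ intrinsicInterior ℝ E ∨
      (0 : EuclideanSpace ℝ (Fin n)) ∈ intrinsicInterior ℝ F) :
    (∃ S : Submodule ℝ (EuclideanSpace ℝ (Fin n)), E = (S : Set _)) ∧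
      (∃ S : Submodule ℝ (EuclideanSpace ℝ (Fin n)), F = (S : Set _)) ∧
      E + F = Set.univ ∧ E ∩ F = {0} :=
  complementary_subspaces_of_unique_decomposition_general n E F hEconv hFconv hE0 hF0 hex huniq
end
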